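/- Let φ : [0,∞) → [0,∞) be an N-function of class C¹([0,∞)) ∩ C²((0,∞)) with φ(0) = 0, φ'(0) = 0, φ' increasing and positive on (0,∞), satisfying p ≤ s·φ''(s)/φ'(s) + 1 ≤ q for all s > 0, where 1 < p ≤ q, and set V(Q) := sqrt(φ'(1+|Q|)/(1+|Q|))·Q for Q ∈ ℝ^{N×n}. Then there is a constant c = c(p,q,N,n) ≥ 1 such that for every measurable set U ⊂ ℝ^m with 0 < |U| < ∞ and every g ∈ L¹(U; ℝ^{N×n}) with ⨍_U |V(g)|² dz < ∞: ⨍_U |V(g) − (V(g))_U|² dz ≤ ⨍_U |V(g) − V((g)_U)|² dz ≤ c · ⨍_U |V(g) − (V(g))_U|² dz, where (h)_U := ⨍_U h dz denotes the mean value. -/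

import Mathlib

open MeasureTheory Real Set Filter
open scoped InnerProductSpace

/-- An N-function `φ` of class `C¹([0,∞)) ∩ C²((0,∞))` with (right) derivative `φ'`
and second derivative `φ''` on `(0,∞)`, satisfying `φ(0) = 0`, `φ'(0) = 0`, `φ'`
increasing and positive on `(0,∞)`, and the index condition
`p ≤ s·φ''(s)/φ'(s) + 1 ≤ q` for all `s > 0`. -/
structure IsNFun (φ φ' φ'' : ℝ → ℝ) (p q : ℝ) : Prop where
  map_zero : φ 0 = 0
  nonneg : ∀ s : ℝ, 0 ≤ s → 0 ≤ φ s
  hasDeriv : ∀ s ∈ Set.Ici (0:ℝ), HasDerivWithinAt φ (φ' s) (Set.Ici 0) s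
  derivCont : ContinuousOn φ' (Set.Ici 0)
  hasDeriv2 : ∀ s ∈ Set.Ioi (0:ℝ), HasDerivWithinAt φ' (φ'' s) (Set.Ioi 0) s
  deriv2Cont : ContinuousOn φ'' (Set.Ioi 0)
  deriv_zero : φ' 0 = 0
  deriv_mono : MonotoneOn φ' (Set.Ici 0)
  deriv_pos : ∀ s : ℝ, 0 < s → 0 < φ' s
  idx_low : ∀ s : ℝ, 0 < s → p ≤ s * φ'' s / φ' s + 1
  idx_high : ∀ s : ℝ, 0 < s → s * φ'' s / φ' s + 1 ≤ q

/-- The shifted N-function `φ_σ(s) = ∫₀^s φ'(σ+t)·t/(σ+t) dt`, expressed through the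
derivative `φ'` of `φ`. -/
noncomputable def shifted (φ' : ℝ → ℝ) (σ s : ℝ) : ℝ :=
  ∫ t in (0:ℝ)..s, φ' (σ + t) * t / (σ + t)

/-- `V(Q) = sqrt(φ'(1+|Q|)/(1+|Q|))·Q`. -/
noncomputable def Vfun {E : Type*} [NormedAddCommGroup E] [NormedSpace ℝ E]
    (φ' : ℝ → ℝ) (Q : E) : E :=
  Real.sqrt (φ' (1 + ‖Q‖) / (1 + ‖Q‖)) • Q

/-!
Write `T = (V(g))_U` and choose `Q` with `V(Q) = T` (`V` is onto). The mean minimizes the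
`L²`-deviation, `⨍ |V(g) - a|² = ⨍ |V(g) - T|² + |T - a|²` for every `a`, which gives the first
inequality and reduces the second one to `|V(Q) - V((g)_U)|² ≲ ⨍ |V(g) - V(Q)|²`.

Both sides are controlled by the pointwise equivalence
`|V(A) - V(B)|² ≈ ω(|B| + |A - B|) |A - B|²`, with `ω(t) = φ'(1 + t) / (1 + t)` (`vWeight φ'`),
whose right-hand side (a proxy for the shifted N-function `φ_{1+|B|}(|A - B|)`) obeys the
Jensen-type inequality `G(⨍ r) ≲ ⨍ G(r)`, since `t ↦ ω(b + t) t` is increasing and doubling.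
Splitting `|V(A) - V(B)|²` into a radial and an angular part reduces the pointwise equivalence to
two-sided bounds on the increments of the scalar function `t ↦ √ω(t) t`. The index `q` enters through
`s φ''(s) ≤ (q - 1) φ'(s)` and the growth bound `φ'(K s) ≤ K^(q-1) φ'(s)` it implies.
-/

variable {φ φ' φ'' : ℝ → ℝ} {p q : ℝ}

theorem sub_le_of_sq_sub_sq_le {x y c : ℝ} (hx : 0 ≤ x) (hxy : x ≤ y) (hc : 0 ≤ c)
    (h : y ^ 2 - x ^ 2 ≤ c * y) : y - x ≤ c := by
  nlinarith

theorem le_two_mul_sub_of_mul_le_sq_sub_sq {x y c K : ℝ} (hx : 0 ≤ x) (hxy : x ≤ y)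
    (hK : 0 ≤ K) (hcy : c ≤ K * y) (h : c * y ≤ K * (y ^ 2 - x ^ 2)) : c ≤ 2 * K * (y - x) := by
  rcases (hx.trans hxy).eq_or_lt with rfl | hy
  · nlinarith
  · have hsum : K * (y ^ 2 - x ^ 2) ≤ 2 * K * (y - x) * y := by
      nlinarith [mul_nonneg hK (sub_nonneg.2 hxy)]
    exact le_of_mul_le_mul_right (h.trans hsum) hy

theorem add_mul_le_add_mul_of_mem_Icc {a₁ b₁ a₂ b₂ d M : ℝ} (hd : d ∈ Icc 0 M)
    (h0 : a₁ ≤ a₂) (hM : a₁ + M * b₁ ≤ a₂ + M * b₂) : a₁ + d * b₁ ≤ a₂ + d * b₂ := by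
  rcases (hd.1.trans hd.2).eq_or_lt with hM0 | hM0
  · obtain rfl : d = 0 := le_antisymm (hM0 ▸ hd.2) hd.1
    simpa using h0
  · nlinarith [mul_le_mul_of_nonneg_left (show M * b₁ - M * b₂ ≤ a₂ - a₁ by linarith) hd.1,
      mul_le_mul_of_nonneg_right hd.2 (show (0:ℝ) ≤ a₂ - a₁ by linarith)]

namespace IsNFun

theorem hasDerivAt_deriv (h : IsNFun φ φ' φ'' p q) {s : ℝ} (hs : 0 < s) :
    HasDerivAt φ' (φ'' s) s :=
  (h.hasDeriv2 s hs).hasDerivAt (Ioi_mem_nhds hs)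

theorem deriv_nonneg (h : IsNFun φ φ' φ'' p q) {s : ℝ} (hs : 0 ≤ s) : 0 ≤ φ' s := by
  rcases hs.eq_or_lt with rfl | hs
  · exact h.deriv_zero.ge
  · exact (h.deriv_pos s hs).le

theorem deriv2_nonneg (h : IsNFun φ φ' φ'' p q) {s : ℝ} (hs : 0 < s) : 0 ≤ φ'' s := by
  rw [← (h.hasDeriv2 s hs).derivWithin (uniqueDiffOn_Ioi 0 s hs)]
  exact (h.deriv_mono.mono Ioi_subset_Ici_self).derivWithin_nonneg

theorem mul_deriv2_le (h : IsNFun φ φ' φ'' p q) {s : ℝ} (hs : 0 < s) :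
    s * φ'' s ≤ (q - 1) * φ' s := by
  have := h.idx_high s hs
  rwa [← le_sub_iff_add_le, div_le_iff₀ (h.deriv_pos s hs)] at this

theorem one_le_q (h : IsNFun φ φ' φ'' p q) : 1 ≤ q := by
  have := h.mul_deriv2_le one_pos
  nlinarith [h.deriv2_nonneg one_pos, h.deriv_pos 1 one_pos]

theorem antitoneOn_deriv_mul_rpow (h : IsNFun φ φ' φ'' p q) :
    AntitoneOn (fun s => φ' s * s ^ (1 - q)) (Ioi 0) := by
  refine antitoneOn_of_hasDerivWithinAt_nonpos (convex_Ioi 0)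
    (f' := fun s => φ'' s * s ^ (1 - q) + φ' s * ((1 - q) * s ^ (1 - q - 1)))
    ((h.derivCont.mono Ioi_subset_Ici_self).mul
      (continuousOn_id.rpow_const fun s hs => Or.inl (ne_of_gt hs)))
    (fun s hs => ?_) (fun s hs => ?_) <;> rw [interior_Ioi, mem_Ioi] at hs
  · exact ((h.hasDerivAt_deriv hs).mul
      (hasDerivAt_rpow_const (Or.inl (ne_of_gt hs)))).hasDerivWithinAt
  · have factor : φ'' s * s ^ (1 - q) + φ' s * ((1 - q) * s ^ (1 - q - 1))
        = s ^ (1 - q) / s * (s * φ'' s - (q - 1) * φ' s) := by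
      rw [rpow_sub_one (ne_of_gt hs)]; field_simp; ring
    rw [factor]
    exact mul_nonpos_of_nonneg_of_nonpos (by positivity) (by linarith [h.mul_deriv2_le hs])

theorem deriv_le_rpow_mul (h : IsNFun φ φ' φ'' p q) {x y : ℝ} (hx : 0 < x) (hxy : x ≤ y) :
    φ' y ≤ (y / x) ^ (q - 1) * φ' x := by
  have hy : 0 < y := hx.trans_le hxy
  calc φ' y = φ' y * y ^ (1 - q) * y ^ (q - 1) := by
        rw [mul_assoc, ← rpow_add hy]; simp
    _ ≤ φ' x * x ^ (1 - q) * y ^ (q - 1) :=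
        mul_le_mul_of_nonneg_right (h.antitoneOn_deriv_mul_rpow hx hy hxy) (by positivity)
    _ = (y / x) ^ (q - 1) * φ' x := by
        rw [div_rpow hy.le hx.le, show 1 - q = -(q - 1) by ring, rpow_neg hx.le]; ring

theorem deriv_le_of_le_mul (h : IsNFun φ φ' φ'' p q) {x y K : ℝ} (hx : 0 < x) (hxy : x ≤ y)
    (hyK : y ≤ K * x) : φ' y ≤ K ^ (q - 1) * φ' x :=
  (h.deriv_le_rpow_mul hx hxy).trans <| mul_le_mul_of_nonneg_right
    (rpow_le_rpow (div_nonneg (hx.le.trans hxy) hx.le) ((div_le_iff₀ hx).2 hyK)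
      (sub_nonneg.2 h.one_le_q)) (h.deriv_nonneg hx.le)

end IsNFun

noncomputable def vWeight (φ' : ℝ → ℝ) (t : ℝ) : ℝ := φ' (1 + t) / (1 + t)

theorem Vfun_eq_smul {E : Type*} [NormedAddCommGroup E] [NormedSpace ℝ E] (A : E) :
    Vfun φ' A = √(vWeight φ' ‖A‖) • A :=
  rfl

namespace IsNFun

theorem vWeight_nonneg (h : IsNFun φ φ' φ'' p q) {t : ℝ} (ht : 0 ≤ t) : 0 ≤ vWeight φ' t :=
  div_nonneg (h.deriv_nonneg (by linarith)) (by linarith)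

theorem continuousOn_vWeight (h : IsNFun φ φ' φ'' p q) : ContinuousOn (vWeight φ') (Ici 0) := by
  have hmaps : MapsTo (fun t : ℝ => 1 + t) (Ici 0) (Ici 0) := fun t ht => by
    simp only [mem_Ici] at ht ⊢; linarith
  exact (h.derivCont.comp (by fun_prop) hmaps).div (by fun_prop) fun t ht => by
    simp only [mem_Ici] at ht; positivity

theorem vWeight_le_rpow_mul (h : IsNFun φ φ' φ'' p q) {u v K : ℝ} (hu : 0 ≤ u) (huv : u ≤ v)
    (hK : 1 + v ≤ K * (1 + u)) : vWeight φ' v ≤ K ^ (q - 1) * vWeight φ' u := by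
  have hgrowth := h.deriv_le_of_le_mul (by linarith : 0 < 1 + u) (by linarith) hK
  calc φ' (1 + v) / (1 + v) ≤ φ' (1 + v) / (1 + u) :=
        div_le_div_of_nonneg_left (h.deriv_nonneg (by linarith)) (by linarith) (by linarith)
    _ ≤ K ^ (q - 1) * φ' (1 + u) / (1 + u) := by gcongr
    _ = K ^ (q - 1) * vWeight φ' u := mul_div_assoc _ _ _

theorem vWeight_le_mul (h : IsNFun φ φ' φ'' p q) {u v K : ℝ} (hu : 0 ≤ u) (huv : u ≤ v)
    (hK : 1 + v ≤ K * (1 + u)) : vWeight φ' u ≤ K * vWeight φ' v := by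
  have hmono : φ' (1 + u) ≤ φ' (1 + v) :=
    h.deriv_mono (by simp only [mem_Ici]; linarith) (by simp only [mem_Ici]; linarith)
      (by linarith)
  unfold vWeight
  rw [mul_div_assoc', div_le_div_iff₀ (by linarith) (by linarith)]
  nlinarith [h.deriv_nonneg (by linarith : 0 ≤ 1 + u)]

theorem vWeight_add_mul_le (h : IsNFun φ φ' φ'' p q) {b s t : ℝ} (hb : 0 ≤ b) (hs : 0 ≤ s)
    (hst : s ≤ t) : vWeight φ' (b + s) * s ≤ vWeight φ' (b + t) * t := by
  have hmono : φ' (1 + (b + s)) ≤ φ' (1 + (b + t)) :=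
    h.deriv_mono (by simp only [mem_Ici]; linarith) (by simp only [mem_Ici]; linarith)
      (by linarith)
  have hfrac : s / (1 + (b + s)) ≤ t / (1 + (b + t)) := by
    rw [div_le_div_iff₀ (by linarith) (by linarith)]; nlinarith
  calc vWeight φ' (b + s) * s = φ' (1 + (b + s)) * (s / (1 + (b + s))) := by
        rw [vWeight]; ring
    _ ≤ φ' (1 + (b + t)) * (t / (1 + (b + t))) :=
        mul_le_mul hmono hfrac (by positivity) (h.deriv_nonneg (by linarith))
    _ = vWeight φ' (b + t) * t := by rw [vWeight]; ring

theorem vWeight_add_mul_sq_le (h : IsNFun φ φ' φ'' p q) {b s t : ℝ} (hb : 0 ≤ b) (hs : 0 ≤ s)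
    (hst : s ≤ t) : vWeight φ' (b + s) * s ^ 2 ≤ vWeight φ' (b + t) * t ^ 2 := by
  have := mul_le_mul (h.vWeight_add_mul_le hb hs hst) hst hs
    (mul_nonneg (h.vWeight_nonneg (by linarith)) (hs.trans hst))
  linarith

theorem vWeight_add_mul_mul_sub_le (h : IsNFun φ φ' φ'' p q) {b t x : ℝ} (hb : 0 ≤ b)
    (ht : 0 ≤ t) (hx : 0 ≤ x) :
    vWeight φ' (b + t) * t * (x - t) ≤ vWeight φ' (b + x) * x ^ 2 := by
  have hwt : 0 ≤ vWeight φ' (b + t) * t := mul_nonneg (h.vWeight_nonneg (by linarith)) ht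
  rcases le_total x t with hxt | htx
  · exact (mul_nonpos_of_nonneg_of_nonpos hwt (by linarith)).trans
      (mul_nonneg (h.vWeight_nonneg (by linarith)) (sq_nonneg x))
  · calc vWeight φ' (b + t) * t * (x - t) ≤ vWeight φ' (b + x) * x * x :=
          mul_le_mul (h.vWeight_add_mul_le hb ht htx) (by linarith) (by linarith)
            (mul_nonneg (h.vWeight_nonneg (by linarith)) hx)
      _ = vWeight φ' (b + x) * x ^ 2 := by ring

theorem hasDerivAt_vWeight (h : IsNFun φ φ' φ'' p q) {t : ℝ} (ht : -1 < t) :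
    HasDerivAt (vWeight φ') ((φ'' (1 + t) * (1 + t) - φ' (1 + t)) / (1 + t) ^ 2) t := by
  have hshift : HasDerivAt (fun t : ℝ => 1 + t) 1 t := (hasDerivAt_id t).const_add 1
  exact (((h.hasDerivAt_deriv (by linarith)).comp t hshift).div hshift (by linarith)).congr_deriv
    (by simp only [Function.comp_apply]; ring)

theorem vWeight_mul_sq_deriv_le (h : IsNFun φ φ' φ'' p q) {t : ℝ} (ht : 0 < t) :
    (φ'' (1 + t) * (1 + t) - φ' (1 + t)) / (1 + t) ^ 2 * t ^ 2
      + vWeight φ' t * (2 * t) ≤ (q + 1) * (vWeight φ' t * t) := by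
  have hu : 0 < 1 + t := by linarith
  have hidx := h.mul_deriv2_le hu
  have hφ := h.deriv_nonneg hu.le
  have hq := h.one_le_q
  unfold vWeight
  field_simp
  nlinarith [mul_le_mul_of_nonneg_right hidx (by positivity : 0 ≤ t * (1 + t)),
    mul_nonneg (mul_nonneg hφ (by linarith : 0 ≤ q - 1)) (by positivity : 0 ≤ (1 + t) ^ 2),
    mul_nonneg hφ (by positivity : 0 ≤ t * (1 + t))]

theorem vWeight_mul_sq_sub_le (h : IsNFun φ φ' φ'' p q) {a b : ℝ} (ha : 0 ≤ a) (hab : a ≤ b) :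
    vWeight φ' b * b ^ 2 - vWeight φ' a * a ^ 2 ≤ (q + 1) * (vWeight φ' b * b) * (b - a) := by
  have hderiv : ∀ t, 0 < t → HasDerivAt (fun t => vWeight φ' t * t ^ 2)
      ((φ'' (1 + t) * (1 + t) - φ' (1 + t)) / (1 + t) ^ 2 * t ^ 2
        + vWeight φ' t * (2 * t)) t := fun t ht =>
    ((h.hasDerivAt_vWeight (by linarith)).fun_mul (hasDerivAt_pow 2 t)).congr_deriv
      (by push_cast; ring)
  refine (convex_Icc a b).image_sub_le_mul_sub_of_deriv_le (f := fun t => vWeight φ' t * t ^ 2)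
    ((h.continuousOn_vWeight.mono fun t ht => ha.trans ht.1).mul (continuousOn_pow 2))
    (fun t ht => ?_) (fun t ht => ?_) a (left_mem_Icc.2 hab) b (right_mem_Icc.2 hab) hab
    <;> rw [interior_Icc] at ht
  · exact (hderiv t (ha.trans_lt ht.1)).differentiableAt.differentiableWithinAt
  · have ht0 : 0 < t := ha.trans_lt ht.1
    rw [(hderiv t ht0).deriv]
    refine (h.vWeight_mul_sq_deriv_le ht0).trans
      (mul_le_mul_of_nonneg_left ?_ (by linarith [h.one_le_q]))
    simpa using h.vWeight_add_mul_le le_rfl ht0.le ht.2.le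

theorem vWeight_mul_mul_sub_le (h : IsNFun φ φ' φ'' p q) {a b : ℝ} (ha : 0 ≤ a) (hab : a ≤ b) :
    vWeight φ' b * b * (b - a)
      ≤ 4 * 2 ^ (q - 1) * (vWeight φ' b * b ^ 2 - vWeight φ' a * a ^ 2) := by
  set m := (a + b) / 2 with hm_def
  have hm : 0 ≤ m := by linarith
  have hmono : ∀ {s t : ℝ}, 0 ≤ s → s ≤ t → vWeight φ' s * s ≤ vWeight φ' t * t :=
    fun hs hst => by simpa using h.vWeight_add_mul_le le_rfl hs hst
  have hdouble : vWeight φ' b * b ≤ 2 * 2 ^ (q - 1) * (vWeight φ' m * m) :=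
    calc vWeight φ' b * b ≤ vWeight φ' (a + b) * (a + b) := hmono (by linarith) (by linarith)
      _ ≤ 2 ^ (q - 1) * vWeight φ' m * (a + b) := mul_le_mul_of_nonneg_right
          (h.vWeight_le_rpow_mul hm (by linarith) (by linarith)) (by linarith)
      _ = 2 * 2 ^ (q - 1) * (vWeight φ' m * m) := by ring
  have hmid : vWeight φ' m * m * (b - m) ≤ vWeight φ' b * b ^ 2 - vWeight φ' a * a ^ 2 := by
    have h1 := mul_le_mul_of_nonneg_right (hmono hm (show m ≤ b by linarith)) (ha.trans hab)
    have h2 : vWeight φ' a * a ^ 2 ≤ vWeight φ' m * m ^ 2 := by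
      simpa using h.vWeight_add_mul_sq_le le_rfl ha (show a ≤ m by linarith)
    nlinarith
  calc vWeight φ' b * b * (b - a) ≤ 2 * 2 ^ (q - 1) * (vWeight φ' m * m) * (b - a) :=
        mul_le_mul_of_nonneg_right hdouble (by linarith)
    _ = 4 * 2 ^ (q - 1) * (vWeight φ' m * m * (b - m)) := by ring
    _ ≤ _ := mul_le_mul_of_nonneg_left hmid (by positivity)

theorem sq_sqrt_vWeight_mul (h : IsNFun φ φ' φ'' p q) {t : ℝ} (ht : 0 ≤ t) :
    (√(vWeight φ' t) * t) ^ 2 = vWeight φ' t * t ^ 2 := by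
  rw [mul_pow, sq_sqrt (h.vWeight_nonneg ht)]

theorem sqrt_vWeight_mul_le_of_le (h : IsNFun φ φ' φ'' p q) {a b : ℝ} (ha : 0 ≤ a)
    (hab : a ≤ b) : √(vWeight φ' a) * a ≤ √(vWeight φ' b) * b := by
  rw [← pow_le_pow_iff_left₀ (mul_nonneg (sqrt_nonneg _) ha)
    (mul_nonneg (sqrt_nonneg _) (ha.trans hab)) two_ne_zero,
    h.sq_sqrt_vWeight_mul ha, h.sq_sqrt_vWeight_mul (ha.trans hab)]
  simpa using h.vWeight_add_mul_sq_le le_rfl ha hab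

theorem sqrt_vWeight_mul_sub_le (h : IsNFun φ φ' φ'' p q) {a b : ℝ} (ha : 0 ≤ a) (hab : a ≤ b) :
    √(vWeight φ' b) * b - √(vWeight φ' a) * a ≤ (q + 1) * √(vWeight φ' b) * (b - a) := by
  have hq := h.one_le_q
  refine sub_le_of_sq_sub_sq_le (mul_nonneg (sqrt_nonneg _) ha) (h.sqrt_vWeight_mul_le_of_le ha hab)
    (mul_nonneg (by positivity) (by linarith)) ?_
  rw [h.sq_sqrt_vWeight_mul (ha.trans hab), h.sq_sqrt_vWeight_mul ha]
  calc _ ≤ (q + 1) * (vWeight φ' b * b) * (b - a) := h.vWeight_mul_sq_sub_le ha hab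
    _ = (q + 1) * √(vWeight φ' b) * (b - a) * (√(vWeight φ' b) * b) := by
        linear_combination
          (-(q + 1) * b * (b - a)) * mul_self_sqrt (h.vWeight_nonneg (ha.trans hab))

theorem sqrt_vWeight_mul_sub_le_sub_sqrt_vWeight_mul (h : IsNFun φ φ' φ'' p q) {a b : ℝ}
    (ha : 0 ≤ a) (hab : a ≤ b) :
    √(vWeight φ' b) * (b - a) ≤ 8 * 2 ^ (q - 1) * (√(vWeight φ' b) * b - √(vWeight φ' a) * a) := by
  have hK : 1 ≤ 4 * (2 : ℝ) ^ (q - 1) := by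
    have := one_le_rpow one_le_two (sub_nonneg.2 h.one_le_q); linarith
  have key := le_two_mul_sub_of_mul_le_sq_sub_sq (K := 4 * 2 ^ (q - 1))
    (c := √(vWeight φ' b) * (b - a)) (mul_nonneg (sqrt_nonneg _) ha)
    (h.sqrt_vWeight_mul_le_of_le ha hab) (by linarith) ?_ ?_
  · linarith
  · nlinarith [mul_nonneg (sqrt_nonneg (vWeight φ' b)) (ha.trans hab), sqrt_nonneg (vWeight φ' b)]
  · rw [h.sq_sqrt_vWeight_mul (ha.trans hab), h.sq_sqrt_vWeight_mul ha]
    calc _ = vWeight φ' b * b * (b - a) := by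
          linear_combination (b * (b - a)) * mul_self_sqrt (h.vWeight_nonneg (ha.trans hab))
      _ ≤ _ := h.vWeight_mul_mul_sub_le ha hab

theorem exists_sqrt_vWeight_mul_eq (h : IsNFun φ φ' φ'' p q) {y : ℝ} (hy : 0 ≤ y) :
    ∃ s, 0 ≤ s ∧ √(vWeight φ' s) * s = y := by
  have hφ1 := h.deriv_pos 1 one_pos
  set s₀ := y ^ 2 / φ' 1 + 1 with hs₀_def
  have hs₀ : 1 ≤ s₀ := le_add_of_nonneg_left (by positivity)
  have hlarge : y ≤ √(vWeight φ' s₀) * s₀ := by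
    rw [← pow_le_pow_iff_left₀ hy (by positivity) two_ne_zero, h.sq_sqrt_vWeight_mul (by linarith)]
    have hmono : φ' 1 ≤ φ' (1 + s₀) :=
      h.deriv_mono (by simp) (by simp only [mem_Ici]; linarith) (by linarith)
    calc y ^ 2 = φ' 1 * (s₀ - 1) := by rw [hs₀_def]; field_simp; ring
      _ ≤ φ' (1 + s₀) * (s₀ ^ 2 / (1 + s₀)) := by
          gcongr
          · exact (h.deriv_nonneg (by linarith)).trans hmono
          · rw [le_div_iff₀ (by linarith)]; nlinarith
      _ = vWeight φ' s₀ * s₀ ^ 2 := by rw [vWeight]; ring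
  obtain ⟨s, hs, hsy⟩ := intermediate_value_Icc (by linarith : (0 : ℝ) ≤ s₀)
    ((continuous_sqrt.comp_continuousOn (h.continuousOn_vWeight.mono
      fun t ht => ht.1)).mul continuousOn_id) ⟨by simpa using hy, hlarge⟩
  exact ⟨s, hs.1, hsy⟩

end IsNFun

section NormedGroup

variable {E : Type*} [SeminormedAddCommGroup E]

theorem max_norm_le_norm_add_norm_sub (A B : E) : max ‖A‖ ‖B‖ ≤ ‖B‖ + ‖A - B‖ :=
  max_le (norm_le_norm_add_norm_sub' A B) (le_add_of_nonneg_right (norm_nonneg _))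

theorem norm_add_norm_sub_le_three_mul_max (A B : E) : ‖B‖ + ‖A - B‖ ≤ 3 * max ‖A‖ ‖B‖ := by
  linarith [norm_sub_le A B, le_max_left ‖A‖ ‖B‖, le_max_right ‖A‖ ‖B‖]

theorem IsNFun.vWeight_add_norm_sub_le (h : IsNFun φ φ' φ'' p q) (A B : E) :
    vWeight φ' (‖B‖ + ‖A - B‖) ≤ 3 ^ (q - 1) * vWeight φ' (max ‖A‖ ‖B‖) :=
  h.vWeight_le_rpow_mul (le_max_of_le_left (norm_nonneg A)) (max_norm_le_norm_add_norm_sub A B)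
    (by linarith [norm_add_norm_sub_le_three_mul_max A B])

theorem IsNFun.vWeight_max_le (h : IsNFun φ φ' φ'' p q) (A B : E) :
    vWeight φ' (max ‖A‖ ‖B‖) ≤ 3 * vWeight φ' (‖B‖ + ‖A - B‖) :=
  h.vWeight_le_mul (le_max_of_le_left (norm_nonneg A)) (max_norm_le_norm_add_norm_sub A B)
    (by linarith [norm_add_norm_sub_le_three_mul_max A B])

end NormedGroup

section NormedSpace

variable {E : Type*} [NormedAddCommGroup E] [NormedSpace ℝ E]

namespace IsNFun

theorem continuous_Vfun (h : IsNFun φ φ' φ'' p q) : Continuous (Vfun φ' : E → E) :=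
  (continuous_sqrt.comp (h.continuousOn_vWeight.comp_continuous continuous_norm
    fun A => norm_nonneg A)).smul continuous_id

theorem exists_Vfun_eq (h : IsNFun φ φ' φ'' p q) (T : E) : ∃ Q : E, Vfun φ' Q = T := by
  rcases eq_or_ne T 0 with rfl | hT
  · exact ⟨0, by simp [Vfun]⟩
  obtain ⟨s, hs, hsT⟩ := h.exists_sqrt_vWeight_mul_eq (norm_nonneg T)
  have hT0 : 0 < ‖T‖ := norm_pos_iff.2 hT
  have hnorm : ‖(s / ‖T‖) • T‖ = s := by
    rw [norm_smul, Real.norm_of_nonneg (by positivity), div_mul_cancel₀ _ hT0.ne']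
  refine ⟨(s / ‖T‖) • T, ?_⟩
  rw [Vfun_eq_smul, hnorm, smul_smul, ← mul_div_assoc, hsT, div_self hT0.ne', one_smul]

end IsNFun

end NormedSpace

section InnerProductSpace

variable {E : Type*} [NormedAddCommGroup E] [InnerProductSpace ℝ E]

theorem norm_smul_sub_smul_sq (α β : ℝ) (A B : E) :
    ‖α • A - β • B‖ ^ 2
      = (β * ‖B‖ - α * ‖A‖) ^ 2 + (‖A‖ * ‖B‖ - ⟪A, B⟫_ℝ) * (2 * (α * β)) := by
  rw [norm_sub_sq_real, norm_smul, norm_smul, real_inner_smul_left, real_inner_smul_right,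
    Real.norm_eq_abs, Real.norm_eq_abs, mul_pow, mul_pow, sq_abs, sq_abs]
  ring

theorem norm_mul_norm_sub_inner_mem_Icc (A B : E) :
    ‖A‖ * ‖B‖ - ⟪A, B⟫_ℝ ∈ Icc 0 (2 * (‖A‖ * ‖B‖)) :=
  ⟨sub_nonneg.2 (real_inner_le_norm A B),
    by linarith [neg_le_of_abs_le (abs_real_inner_le_norm A B)]⟩

namespace IsNFun

/- Both `‖V A - V B‖²` and `‖A - B‖²` are affine in `‖A‖ ‖B‖ - ⟪A, B⟫ ∈ [0, 2 ‖A‖ ‖B‖]`, so it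
suffices to compare them at the two endpoints: parallel `A, B` (the scalar estimate) and
antiparallel `A, B`. -/
theorem norm_Vfun_sub_sq_le_of_norm_le (h : IsNFun φ φ' φ'' p q) {A B : E} (hAB : ‖A‖ ≤ ‖B‖) :
    ‖Vfun φ' A - Vfun φ' B‖ ^ 2 ≤ (q + 1) ^ 2 * (vWeight φ' ‖B‖ * ‖A - B‖ ^ 2) := by
  have hq := h.one_le_q
  have hw := h.vWeight_nonneg (norm_nonneg B)
  have hmono := h.sqrt_vWeight_mul_le_of_le (norm_nonneg A) hAB
  have hend0 : (√(vWeight φ' ‖B‖) * ‖B‖ - √(vWeight φ' ‖A‖) * ‖A‖) ^ 2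
      ≤ (q + 1) ^ 2 * vWeight φ' ‖B‖ * (‖B‖ - ‖A‖) ^ 2 := by
    calc _ ≤ ((q + 1) * √(vWeight φ' ‖B‖) * (‖B‖ - ‖A‖)) ^ 2 :=
          pow_le_pow_left₀ (by linarith) (h.sqrt_vWeight_mul_sub_le (norm_nonneg A) hAB) 2
      _ = _ := by rw [mul_pow, mul_pow, sq_sqrt hw]
  have hendM : (√(vWeight φ' ‖B‖) * ‖B‖ - √(vWeight φ' ‖A‖) * ‖A‖) ^ 2
        + 2 * (‖A‖ * ‖B‖) * (2 * (√(vWeight φ' ‖A‖) * √(vWeight φ' ‖B‖)))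
      ≤ (q + 1) ^ 2 * vWeight φ' ‖B‖ * (‖B‖ - ‖A‖) ^ 2
        + 2 * (‖A‖ * ‖B‖) * ((q + 1) ^ 2 * vWeight φ' ‖B‖ * 2) := by
    calc _ = (√(vWeight φ' ‖A‖) * ‖A‖ + √(vWeight φ' ‖B‖) * ‖B‖) ^ 2 := by ring
      _ ≤ (2 * (√(vWeight φ' ‖B‖) * ‖B‖)) ^ 2 := pow_le_pow_left₀ (by positivity) (by linarith) 2
      _ = 4 * (vWeight φ' ‖B‖ * ‖B‖ ^ 2) := by
          rw [mul_pow, h.sq_sqrt_vWeight_mul (norm_nonneg B)]; ring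
      _ ≤ (q + 1) ^ 2 * (vWeight φ' ‖B‖ * (‖A‖ + ‖B‖) ^ 2) := by
          gcongr
          · nlinarith
          · linarith [norm_nonneg A]
      _ = _ := by ring
  have key := add_mul_le_add_mul_of_mem_Icc (norm_mul_norm_sub_inner_mem_Icc A B) hend0 hendM
  have hsub := norm_smul_sub_smul_sq 1 1 A B
  simp only [one_smul, one_mul, mul_one] at hsub
  rw [Vfun_eq_smul, Vfun_eq_smul, norm_smul_sub_smul_sq, hsub]
  linear_combination key

theorem vWeight_mul_norm_sub_sq_le_of_norm_le (h : IsNFun φ φ' φ'' p q) {A B : E}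
    (hAB : ‖A‖ ≤ ‖B‖) :
    vWeight φ' ‖B‖ * ‖A - B‖ ^ 2 ≤ (8 * 2 ^ (q - 1)) ^ 2 * ‖Vfun φ' A - Vfun φ' B‖ ^ 2 := by
  have hw := h.vWeight_nonneg (norm_nonneg B)
  have hC : 8 ≤ 8 * (2 : ℝ) ^ (q - 1) := by
    have := one_le_rpow one_le_two (sub_nonneg.2 h.one_le_q); linarith
  have hFa : 0 ≤ √(vWeight φ' ‖A‖) * ‖A‖ := mul_nonneg (sqrt_nonneg _) (norm_nonneg A)
  have hmono := h.sqrt_vWeight_mul_le_of_le (norm_nonneg A) hAB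
  have hend0 : vWeight φ' ‖B‖ * (‖B‖ - ‖A‖) ^ 2
      ≤ (8 * 2 ^ (q - 1)) ^ 2 * (√(vWeight φ' ‖B‖) * ‖B‖ - √(vWeight φ' ‖A‖) * ‖A‖) ^ 2 := by
    calc _ = (√(vWeight φ' ‖B‖) * (‖B‖ - ‖A‖)) ^ 2 := by rw [mul_pow, sq_sqrt hw]
      _ ≤ (8 * 2 ^ (q - 1) * (√(vWeight φ' ‖B‖) * ‖B‖ - √(vWeight φ' ‖A‖) * ‖A‖)) ^ 2 :=
          pow_le_pow_left₀ (mul_nonneg (sqrt_nonneg _) (by linarith))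
            (h.sqrt_vWeight_mul_sub_le_sub_sqrt_vWeight_mul (norm_nonneg A) hAB) 2
      _ = _ := by ring
  have hendM : vWeight φ' ‖B‖ * (‖B‖ - ‖A‖) ^ 2 + 2 * (‖A‖ * ‖B‖) * (vWeight φ' ‖B‖ * 2)
      ≤ (8 * 2 ^ (q - 1)) ^ 2 * (√(vWeight φ' ‖B‖) * ‖B‖ - √(vWeight φ' ‖A‖) * ‖A‖) ^ 2
        + 2 * (‖A‖ * ‖B‖)
          * ((8 * 2 ^ (q - 1)) ^ 2 * (2 * (√(vWeight φ' ‖A‖) * √(vWeight φ' ‖B‖)))) := by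
    calc _ = vWeight φ' ‖B‖ * (‖A‖ + ‖B‖) ^ 2 := by ring
      _ ≤ 4 * (vWeight φ' ‖B‖ * ‖B‖ ^ 2) := by
          nlinarith [mul_le_mul_of_nonneg_left
            (show (‖A‖ + ‖B‖) ^ 2 ≤ 4 * ‖B‖ ^ 2 by nlinarith [norm_nonneg A]) hw]
      _ = 4 * (√(vWeight φ' ‖B‖) * ‖B‖) ^ 2 := by rw [h.sq_sqrt_vWeight_mul (norm_nonneg B)]
      _ ≤ (8 * 2 ^ (q - 1)) ^ 2 * (√(vWeight φ' ‖A‖) * ‖A‖ + √(vWeight φ' ‖B‖) * ‖B‖) ^ 2 := by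
          gcongr
          · nlinarith
          · linarith
      _ = _ := by ring
  have key := add_mul_le_add_mul_of_mem_Icc (norm_mul_norm_sub_inner_mem_Icc A B) hend0 hendM
  have hsub := norm_smul_sub_smul_sq 1 1 A B
  simp only [one_smul, one_mul, mul_one] at hsub
  rw [Vfun_eq_smul, Vfun_eq_smul, norm_smul_sub_smul_sq, hsub]
  linear_combination key

theorem norm_Vfun_sub_sq_le (h : IsNFun φ φ' φ'' p q) (A B : E) :
    ‖Vfun φ' A - Vfun φ' B‖ ^ 2 ≤ (q + 1) ^ 2 * (vWeight φ' (max ‖A‖ ‖B‖) * ‖A - B‖ ^ 2) := by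
  rcases le_total ‖A‖ ‖B‖ with hAB | hBA
  · rw [max_eq_right hAB]
    exact h.norm_Vfun_sub_sq_le_of_norm_le hAB
  · rw [max_eq_left hBA, norm_sub_rev A, norm_sub_rev (Vfun φ' A)]
    exact h.norm_Vfun_sub_sq_le_of_norm_le hBA

theorem vWeight_mul_norm_sub_sq_le (h : IsNFun φ φ' φ'' p q) (A B : E) :
    vWeight φ' (max ‖A‖ ‖B‖) * ‖A - B‖ ^ 2
      ≤ (8 * 2 ^ (q - 1)) ^ 2 * ‖Vfun φ' A - Vfun φ' B‖ ^ 2 := by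
  rcases le_total ‖A‖ ‖B‖ with hAB | hBA
  · rw [max_eq_right hAB]
    exact h.vWeight_mul_norm_sub_sq_le_of_norm_le hAB
  · rw [max_eq_left hBA, norm_sub_rev A, norm_sub_rev (Vfun φ' A)]
    exact h.vWeight_mul_norm_sub_sq_le_of_norm_le hBA

theorem norm_Vfun_sub_sq_le_vWeight_add (h : IsNFun φ φ' φ'' p q) (A B : E) :
    ‖Vfun φ' A - Vfun φ' B‖ ^ 2
      ≤ 3 * (q + 1) ^ 2 * (vWeight φ' (‖B‖ + ‖A - B‖) * ‖A - B‖ ^ 2) := by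
  calc _ ≤ (q + 1) ^ 2 * (vWeight φ' (max ‖A‖ ‖B‖) * ‖A - B‖ ^ 2) := h.norm_Vfun_sub_sq_le A B
    _ ≤ (q + 1) ^ 2 * (3 * vWeight φ' (‖B‖ + ‖A - B‖) * ‖A - B‖ ^ 2) := by
        gcongr; exact h.vWeight_max_le A B
    _ = _ := by ring

theorem vWeight_add_mul_sq_le_norm_Vfun_sub (h : IsNFun φ φ' φ'' p q) (A B : E) :
    vWeight φ' (‖B‖ + ‖A - B‖) * ‖A - B‖ ^ 2
      ≤ 3 ^ (q - 1) * (8 * 2 ^ (q - 1)) ^ 2 * ‖Vfun φ' A - Vfun φ' B‖ ^ 2 := by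
  calc _ ≤ 3 ^ (q - 1) * vWeight φ' (max ‖A‖ ‖B‖) * ‖A - B‖ ^ 2 :=
        mul_le_mul_of_nonneg_right (h.vWeight_add_norm_sub_le A B) (sq_nonneg _)
    _ ≤ 3 ^ (q - 1) * ((8 * 2 ^ (q - 1)) ^ 2 * ‖Vfun φ' A - Vfun φ' B‖ ^ 2) := by
        rw [mul_assoc]
        exact mul_le_mul_of_nonneg_left (h.vWeight_mul_norm_sub_sq_le A B) (by positivity)
    _ = _ := by ring

end IsNFun

end InnerProductSpace

section ProbabilityMeasure

variable {α : Type*} [MeasurableSpace α] {μ : Measure α} [IsProbabilityMeasure μ]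
  {E : Type*} [NormedAddCommGroup E] [InnerProductSpace ℝ E]

theorem integral_norm_sub_sq [CompleteSpace E] {F : α → E} (hF : MemLp F 2 μ) (a : E) :
    ∫ z, ‖F z - a‖ ^ 2 ∂μ = ∫ z, ‖F z - ∫ w, F w ∂μ‖ ^ 2 ∂μ + ‖(∫ w, F w ∂μ) - a‖ ^ 2 := by
  set T := ∫ w, F w ∂μ
  have hF1 : Integrable (fun z => F z - T) μ := (hF.integrable one_le_two).sub (integrable_const T)
  have hsq : Integrable (fun z => ‖F z - T‖ ^ 2) μ :=
    (memLp_two_iff_integrable_sq_norm hF1.1).1 (hF.sub (memLp_const T))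
  have hcross : Integrable (fun z => 2 * ⟪T - a, F z - T⟫_ℝ) μ :=
    (hF1.const_inner (T - a)).const_mul 2
  have hsum : Integrable (fun z => ‖F z - T‖ ^ 2 + 2 * ⟪T - a, F z - T⟫_ℝ) μ := hsq.add hcross
  have hcross_zero : ∫ z, 2 * ⟪T - a, F z - T⟫_ℝ ∂μ = 0 := by
    rw [integral_const_mul, integral_inner hF1, integral_sub (hF.integrable one_le_two)
      (integrable_const T), integral_const, probReal_univ, one_smul, sub_self, inner_zero_right,
      mul_zero]
  calc ∫ z, ‖F z - a‖ ^ 2 ∂μ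
        = ∫ z, (‖F z - T‖ ^ 2 + 2 * ⟪T - a, F z - T⟫_ℝ + ‖T - a‖ ^ 2) ∂μ := by
        congr with z
        rw [show F z - a = (F z - T) + (T - a) by abel, norm_add_sq_real, real_inner_comm]
    _ = _ := by
        rw [integral_add hsum (integrable_const _), integral_add hsq hcross,
          hcross_zero, integral_const, probReal_univ, one_smul, add_zero]

namespace IsNFun

theorem vWeight_add_integral_mul_sq_le (h : IsNFun φ φ' φ'' p q) {b : ℝ} (hb : 0 ≤ b)
    {r : α → ℝ} (hr0 : ∀ z, 0 ≤ r z) (hr : Integrable r μ)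
    (hG : Integrable (fun z => vWeight φ' (b + r z) * r z ^ 2) μ) :
    vWeight φ' (b + ∫ z, r z ∂μ) * (∫ z, r z ∂μ) ^ 2
      ≤ 4 * 2 ^ (q - 1) * ∫ z, vWeight φ' (b + r z) * r z ^ 2 ∂μ := by
  set t := ∫ z, r z ∂μ
  have ht : 0 ≤ t := integral_nonneg hr0
  -- Chebyshev at the level `t / 2`, then doubling from `t / 2` back to `t`
  have hhalf : vWeight φ' (b + t / 2) * (t / 2) * (t / 2)
      ≤ ∫ z, vWeight φ' (b + r z) * r z ^ 2 ∂μ := by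
    have hlin : Integrable (fun z => vWeight φ' (b + t / 2) * (t / 2) * (r z - t / 2)) μ :=
      (hr.sub (integrable_const (t / 2))).const_mul _
    have := integral_mono hlin hG fun z => h.vWeight_add_mul_mul_sub_le hb (by linarith) (hr0 z)
    rwa [integral_const_mul, integral_sub hr (integrable_const _), integral_const, probReal_univ,
      one_smul, show t - t / 2 = t / 2 by ring] at this
  have hdouble : vWeight φ' (b + t) ≤ 2 ^ (q - 1) * vWeight φ' (b + t / 2) :=
    h.vWeight_le_rpow_mul (by linarith) (by linarith) (by linarith)
  calc vWeight φ' (b + t) * t ^ 2 ≤ 2 ^ (q - 1) * vWeight φ' (b + t / 2) * t ^ 2 :=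
        mul_le_mul_of_nonneg_right hdouble (sq_nonneg t)
    _ = 4 * 2 ^ (q - 1) * (vWeight φ' (b + t / 2) * (t / 2) * (t / 2)) := by ring
    _ ≤ _ := mul_le_mul_of_nonneg_left hhalf (by positivity)

end IsNFun

theorem IsNFun.vWeight_add_integral_norm_sub_mul_sq_le (h : IsNFun φ φ' φ'' p q)
    {g : α → E} (hg : Integrable g μ) (hV : MemLp (fun z => Vfun φ' (g z)) 2 μ) (Q : E) :
    vWeight φ' (‖Q‖ + ∫ z, ‖g z - Q‖ ∂μ) * (∫ z, ‖g z - Q‖ ∂μ) ^ 2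
      ≤ 4 * 2 ^ (q - 1) * (3 ^ (q - 1) * (8 * 2 ^ (q - 1)) ^ 2)
        * ∫ z, ‖Vfun φ' (g z) - Vfun φ' Q‖ ^ 2 ∂μ := by
  have hdev : Integrable (fun z => ‖Vfun φ' (g z) - Vfun φ' Q‖ ^ 2) μ :=
    (memLp_two_iff_integrable_sq_norm (hV.1.sub aestronglyMeasurable_const)).1
      (hV.sub (memLp_const _))
  have hpoint := fun z => h.vWeight_add_mul_sq_le_norm_Vfun_sub (g z) Q
  have hG : Integrable (fun z => vWeight φ' (‖Q‖ + ‖g z - Q‖) * ‖g z - Q‖ ^ 2) μ := by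
    have hcont : Continuous fun x : E => vWeight φ' (‖Q‖ + ‖x - Q‖) * ‖x - Q‖ ^ 2 :=
      (h.continuousOn_vWeight.comp_continuous (by fun_prop) fun x => by
        simp only [mem_Ici]; positivity).mul (by fun_prop)
    refine (hdev.const_mul (3 ^ (q - 1) * (8 * 2 ^ (q - 1)) ^ 2)).mono'
      (hcont.comp_aestronglyMeasurable hg.1) (ae_of_all _ fun z => ?_)
    rw [Real.norm_of_nonneg (mul_nonneg (h.vWeight_nonneg (by positivity)) (sq_nonneg _))]
    exact hpoint z
  calc _ ≤ 4 * 2 ^ (q - 1) * ∫ z, vWeight φ' (‖Q‖ + ‖g z - Q‖) * ‖g z - Q‖ ^ 2 ∂μ :=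
        h.vWeight_add_integral_mul_sq_le (norm_nonneg Q) (fun z => norm_nonneg _)
          (hg.sub (integrable_const Q)).norm hG
    _ ≤ 4 * 2 ^ (q - 1)
          * ∫ z, 3 ^ (q - 1) * (8 * 2 ^ (q - 1)) ^ 2 * ‖Vfun φ' (g z) - Vfun φ' Q‖ ^ 2 ∂μ :=
        mul_le_mul_of_nonneg_left (integral_mono hG (hdev.const_mul _) hpoint) (by positivity)
    _ = _ := by rw [integral_const_mul]; ring

noncomputable def vMeanConst (q : ℝ) : ℝ :=
  3 * (q + 1) ^ 2 * (4 * 2 ^ (q - 1) * (3 ^ (q - 1) * (8 * 2 ^ (q - 1)) ^ 2))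

theorem IsNFun.norm_integral_Vfun_sub_Vfun_integral_sq_le [CompleteSpace E]
    (h : IsNFun φ φ' φ'' p q) {g : α → E} (hg : Integrable g μ)
    (hV : MemLp (fun z => Vfun φ' (g z)) 2 μ) :
    ‖(∫ z, Vfun φ' (g z) ∂μ) - Vfun φ' (∫ z, g z ∂μ)‖ ^ 2
      ≤ vMeanConst q * ∫ z, ‖Vfun φ' (g z) - ∫ w, Vfun φ' (g w) ∂μ‖ ^ 2 ∂μ := by
  set P := ∫ z, g z ∂μ
  obtain ⟨Q, hQ⟩ := h.exists_Vfun_eq (∫ z, Vfun φ' (g z) ∂μ)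
  have hPQ : ‖P - Q‖ ≤ ∫ z, ‖g z - Q‖ ∂μ := by
    calc ‖P - Q‖ = ‖∫ z, (g z - Q) ∂μ‖ := by
          rw [integral_sub hg (integrable_const Q), integral_const, probReal_univ, one_smul]
      _ ≤ _ := norm_integral_le_integral_norm _
  rw [← hQ, norm_sub_rev]
  calc ‖Vfun φ' P - Vfun φ' Q‖ ^ 2
        ≤ 3 * (q + 1) ^ 2 * (vWeight φ' (‖Q‖ + ‖P - Q‖) * ‖P - Q‖ ^ 2) :=
        h.norm_Vfun_sub_sq_le_vWeight_add P Q
    _ ≤ 3 * (q + 1) ^ 2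
          * (vWeight φ' (‖Q‖ + ∫ z, ‖g z - Q‖ ∂μ) * (∫ z, ‖g z - Q‖ ∂μ) ^ 2) :=
        mul_le_mul_of_nonneg_left (h.vWeight_add_mul_sq_le (norm_nonneg Q) (norm_nonneg _) hPQ)
          (by positivity)
    _ ≤ 3 * (q + 1) ^ 2 * (4 * 2 ^ (q - 1) * (3 ^ (q - 1) * (8 * 2 ^ (q - 1)) ^ 2)
          * ∫ z, ‖Vfun φ' (g z) - Vfun φ' Q‖ ^ 2 ∂μ) :=
        mul_le_mul_of_nonneg_left (h.vWeight_add_integral_norm_sub_mul_sq_le hg hV Q)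
          (by positivity)
    _ = _ := by rw [vMeanConst]; ring

end ProbabilityMeasure

theorem V_mean_equivalence_general (m N n : ℕ) (p q : ℝ) (φ φ' φ'' : ℝ → ℝ)
    (h : IsNFun φ φ' φ'' p q) :
    ∃ c : ℝ, 1 ≤ c ∧ ∀ U : Set (EuclideanSpace ℝ (Fin m)), MeasurableSet U →
      0 < volume U → volume U < ⊤ →
      ∀ g : EuclideanSpace ℝ (Fin m) → EuclideanSpace ℝ (Fin N × Fin n),
        IntegrableOn g U →
        IntegrableOn (fun z => ‖Vfun φ' (g z)‖ ^ 2) U →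
        (⨍ z in U, ‖Vfun φ' (g z) - ⨍ w in U, Vfun φ' (g w)‖ ^ 2) ≤
            (⨍ z in U, ‖Vfun φ' (g z) - Vfun φ' (⨍ w in U, g w)‖ ^ 2) ∧
          (⨍ z in U, ‖Vfun φ' (g z) - Vfun φ' (⨍ w in U, g w)‖ ^ 2) ≤
            c * ⨍ z in U, ‖Vfun φ' (g z) - ⨍ w in U, Vfun φ' (g w)‖ ^ 2 := by
  refine ⟨1 + vMeanConst q, le_add_of_nonneg_right (by rw [vMeanConst]; positivity),
    fun U _ hU0 hUtop g hg hV => ?_⟩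
  set μ := volume.restrict U
  have : IsFiniteMeasure μ := ⟨by rwa [Measure.restrict_apply_univ]⟩
  have : NeZero μ := ⟨fun hμ => hU0.ne' (Measure.restrict_eq_zero.1 hμ)⟩
  -- averages over `U` are integrals against the normalized measure
  have hc : (μ univ)⁻¹ ≠ ⊤ := ENNReal.inv_ne_top.2 (NeZero.ne _)
  have hgν := hg.smul_measure hc
  have hVν : MemLp (fun z => Vfun φ' (g z)) 2 ((μ univ)⁻¹ • μ) :=
    (memLp_two_iff_integrable_sq_norm (h.continuous_Vfun.comp_aestronglyMeasurable hgν.1)).2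
      (hV.smul_measure hc)
  simp only [average_eq']
  rw [integral_norm_sub_sq hVν (Vfun φ' _)]
  have key := h.norm_integral_Vfun_sub_Vfun_integral_sq_le hgν hVν
  exact ⟨le_add_of_nonneg_right (sq_nonneg _), by linarith⟩

/-- For an N-function `φ` with index condition `p ≤ s·φ''(s)/φ'(s)+1 ≤ q` (`1 < p ≤ q`):
`⨍_U |V(g) − (V(g))_U|² ≤ ⨍_U |V(g) − V((g)_U)|² ≤ c·⨍_U |V(g) − (V(g))_U|²`
for every measurable `U` of positive finite measure and `g ∈ L¹(U)` with
`⨍_U |V(g)|² < ∞`. -/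
theorem V_mean_equivalence (m N n : ℕ) (p q : ℝ) (φ φ' φ'' : ℝ → ℝ)
    (hp : 1 < p) (hpq : p ≤ q) (h : IsNFun φ φ' φ'' p q) :
    ∃ c : ℝ, 1 ≤ c ∧ ∀ U : Set (EuclideanSpace ℝ (Fin m)), MeasurableSet U →
      0 < volume U → volume U < ⊤ →
      ∀ g : EuclideanSpace ℝ (Fin m) → EuclideanSpace ℝ (Fin N × Fin n),
        IntegrableOn g U →
        IntegrableOn (fun z => ‖Vfun φ' (g z)‖ ^ 2) U →
        (⨍ z in U, ‖Vfun φ' (g z) - ⨍ w in U, Vfun φ' (g w)‖ ^ 2) ≤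
            (⨍ z in U, ‖Vfun φ' (g z) - Vfun φ' (⨍ w in U, g w)‖ ^ 2) ∧
          (⨍ z in U, ‖Vfun φ' (g z) - Vfun φ' (⨍ w in U, g w)‖ ^ 2) ≤
            c * ⨍ z in U, ‖Vfun φ' (g z) - ⨍ w in U, Vfun φ' (g w)‖ ^ 2 :=
  V_mean_equivalence_general m N n p q φ φ' φ'' h
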